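/- arXiv:1406.0739 — 6 statements merged into one kernel-verified Lean document; each statement's English description precedes it below -/
import Mathlib

section
/- Let φ: ℝ^m → ℝ^L be a smooth map which is weakly conformal, i.e. (Dφ(x))ᵀ Dφ(x) = ρ(x) I_m for all x, for some smooth function ρ: ℝ^m → [0,∞). Then div((Dφ)ᵀDφ) = ∇ρ, so the 1-form div φ*h is exact; consequently, for every smooth compactly supported vector field X with div X = 0, ∫_{ℝ^m} ⟨ (Dφ)ᵀDφ, (DX)ᵀ + DX ⟩_F dx = 0. (Flat-space case of Corollary 1 of the paper: every weakly conformal map of finite Dirichlet energy is restricted harmonic.) -/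
noncomputable section

/-- The `i`-th partial derivative of a scalar function on `ℝ^m`. -/
def pd {m : ℕ} (i : Fin m) (f : (Fin m → ℝ) → ℝ) (x : Fin m → ℝ) : ℝ :=
  fderiv ℝ f x (Pi.single i 1)

/-- Jacobian matrix entry `(DX)_{ij} = ∂X_i/∂x_j` of a vector field on `ℝ^m`. -/
def jac {m : ℕ} (X : (Fin m → ℝ) → (Fin m → ℝ)) (x : Fin m → ℝ) (i j : Fin m) : ℝ :=
  pd j (fun y => X y i) x

/-- Flat-space case of Corollary 1: a weakly conformal map has `div φ*h = ∇ρ` exact,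
so it is restricted harmonic. -/
theorem stmt3 {m L : ℕ}
    (φ : (Fin m → ℝ) → (Fin L → ℝ)) (hφ : ContDiff ℝ (⊤ : ℕ∞) φ)
    (ρ : (Fin m → ℝ) → ℝ) (hρ : ContDiff ℝ (⊤ : ℕ∞) ρ) (hρ0 : ∀ x, 0 ≤ ρ x)
    (hconf : ∀ (x : Fin m → ℝ) (i j : Fin m),
      (∑ a, pd i (fun y => φ y a) x * pd j (fun y => φ y a) x)
        = ρ x * (if i = j then 1 else 0)) :
    (∀ (j : Fin m) (x : Fin m → ℝ),
      (∑ i, pd i (fun y => ∑ a, pd i (fun z => φ z a) y * pd j (fun z => φ z a) y) x)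
        = pd j ρ x)
    ∧ ∀ X : (Fin m → ℝ) → (Fin m → ℝ), ContDiff ℝ (⊤ : ℕ∞) X → HasCompactSupport X →
        (∀ x, ∑ i, jac X x i i = 0) →
        ∫ x : Fin m → ℝ, ∑ i, ∑ j,
          (∑ a, pd i (fun y => φ y a) x * pd j (fun y => φ y a) x)
            * (jac X x j i + jac X x i j) = 0 := by
  constructor
  · intro j x
    have key : ∀ i : Fin m,
        pd i (fun y => ∑ a, pd i (fun z => φ z a) y * pd j (fun z => φ z a) y) x
          = (if i = j then 1 else 0) * pd i ρ x := by
      intro i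
      have hfun : (fun y => ∑ a, pd i (fun z => φ z a) y * pd j (fun z => φ z a) y)
          = fun y => ρ y * (if i = j then 1 else 0) := funext fun y => hconf y i j
      rw [pd, hfun, fderiv_mul_const (hρ.differentiable (by simp)).differentiableAt]
      simp [pd, mul_comm, apply_ite (fun f : (Fin m → ℝ) →L[ℝ] ℝ => f (Pi.single i 1))]
    rw [Finset.sum_congr rfl fun i _ => key i]
    simp
  · intro X hX hXc hdiv
    have hx0 : ∀ x : Fin m → ℝ,
        (∑ i, ∑ j, (∑ a, pd i (fun y => φ y a) x * pd j (fun y => φ y a) x)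
            * (jac X x j i + jac X x i j)) = 0 := by
      intro x
      calc (∑ i, ∑ j, (∑ a, pd i (fun y => φ y a) x * pd j (fun y => φ y a) x)
            * (jac X x j i + jac X x i j))
          = ∑ i, 2 * ρ x * jac X x i i := by
            refine Finset.sum_congr rfl fun i _ => ?_
            rw [Finset.sum_eq_single i]
            · rw [hconf x i i]; simp; ring
            · intro j _ hj
              rw [hconf x i j, if_neg (Ne.symm hj)]
              ring
            · simp
        _ = 2 * ρ x * ∑ i, jac X x i i := by rw [Finset.mul_sum]
        _ = 0 := by rw [hdiv x, mul_zero]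
    simp only [hx0]
    exact MeasureTheory.integral_zero _ _
end
end

section
/- Let f: (0,∞) → ℝ be smooth and B ∈ ℤ, and define the axially symmetric baby Skyrme field φ: ℝ²∖{0} → ℝ³ by φ(x) = ( sin f(|x|)·Re(w^B), sin f(|x|)·Im(w^B), cos f(|x|) ), where w = (x₁ + i x₂)/|x|. Then the 1-form ν = div( (Dφ)ᵀDφ ) on ℝ²∖{0} is closed: ∂₁ν₂ = ∂₂ν₁ everywhere on ℝ²∖{0}. (The Example of section 2 of the paper: every axially symmetric baby Skyrme field is restricted harmonic.) -/
noncomputable section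

/-- Pullback metric `(φ*h)_{ij} = Σ_a ∂_iφ_a ∂_jφ_a` of a map `φ : ℝ^m → ℝ^L`. -/
def pbm {m L : ℕ} (φ : (Fin m → ℝ) → (Fin L → ℝ)) (x : Fin m → ℝ) (i j : Fin m) : ℝ :=
  ∑ a, pd i (fun y => φ y a) x * pd j (fun y => φ y a) x

/-- The 1-form `div (φ*h)`, with `(div α)_j = Σ_i ∂_i α_{ij}`. -/
def divpbm {m L : ℕ} (φ : (Fin m → ℝ) → (Fin L → ℝ)) (j : Fin m) (x : Fin m → ℝ) : ℝ :=
  ∑ i, pd i (fun y => pbm φ y i j) x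

/-- Euclidean norm on `ℝ²`. -/
def nrm2 (x : Fin 2 → ℝ) : ℝ := Real.sqrt (x 0 ^ 2 + x 1 ^ 2)

namespace S12

def proj2 (i : Fin 2) : (Fin 2 → ℝ) →L[ℝ] ℝ := ContinuousLinearMap.proj i

def r2 (y : Fin 2 → ℝ) : ℝ := y 0 ^ 2 + y 1 ^ 2

def lgen {M : Type*} [NormedAddCommGroup M] [NormedSpace ℝ M] (c0 c1 : M) :
    (Fin 2 → ℝ) →L[ℝ] M := (proj2 0).smulRight c0 + (proj2 1).smulRight c1

@[simp] lemma lgen_apply {M : Type*} [NormedAddCommGroup M] [NormedSpace ℝ M] (c0 c1 : M)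
    (v : Fin 2 → ℝ) : lgen c0 c1 v = v 0 • c0 + v 1 • c1 := by
  simp [lgen, proj2]

lemma hasFDerivAt_r2 (x : Fin 2 → ℝ) : HasFDerivAt r2 (lgen (2 * x 0) (2 * x 1)) x := by
  have h0 : HasFDerivAt (fun y : Fin 2 → ℝ => y 0) (proj2 0) x := (proj2 0).hasFDerivAt
  have h1 : HasFDerivAt (fun y : Fin 2 → ℝ => y 1) (proj2 1) x := (proj2 1).hasFDerivAt
  have h := ((h0.mul h0).add (h1.mul h1))
  have heq : r2 = fun y : Fin 2 → ℝ => y 0 * y 0 + y 1 * y 1 := by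
    funext y; simp [r2]; ring
  rw [heq]; refine h.congr_fderiv (Eq.symm ?_); ext v; simp [proj2]; ring

lemma hasFDerivAt_comp_r2 (G : ℝ → ℝ) (x : Fin 2 → ℝ) (hG : DifferentiableAt ℝ G (r2 x)) :
    HasFDerivAt (fun y => G (r2 y))
      (lgen (deriv G (r2 x) * (2 * x 0)) (deriv G (r2 x) * (2 * x 1))) x := by
  have h := HasDerivAt.comp_hasFDerivAt x hG.hasDerivAt (hasFDerivAt_r2 x)
  refine h.congr_fderiv (Eq.symm ?_); ext v; simp [proj2]; ring

lemma pd_eq {F : (Fin 2 → ℝ) → ℝ} {D : (Fin 2 → ℝ) →L[ℝ] ℝ} (i : Fin 2) (x : Fin 2 → ℝ)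
    (h : HasFDerivAt F D x) : pd i F x = D (Pi.single i 1) := by
  rw [pd, h.fderiv]

lemma pd_radial_mul (G : ℝ → ℝ) (x : Fin 2 → ℝ) (hG : DifferentiableAt ℝ G (r2 x))
    (k j : Fin 2) :
    pd k (fun y => G (r2 y) * y j) x
      = deriv G (r2 x) * (2 * x k) * x j + G (r2 x) * (if k = j then 1 else 0) := by
  have h := (hasFDerivAt_comp_r2 G x hG).mul ((proj2 j).hasFDerivAt)
  simp only [proj2, ContinuousLinearMap.proj_apply] at h
  rw [pd_eq (F := fun y => G (r2 y) * y j) k x h]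
  fin_cases k <;> fin_cases j <;>
    simp [proj2, Pi.single_apply] <;> ring

lemma pd_quad (G H : ℝ → ℝ) (c : ℝ) (x : Fin 2 → ℝ) (hG : DifferentiableAt ℝ G (r2 x))
    (hH : DifferentiableAt ℝ H (r2 x)) (k i j : Fin 2) :
    pd k (fun y => G (r2 y) * (y i * y j) + H (r2 y) * c) x
      = deriv G (r2 x) * (2 * x k) * (x i * x j)
        + G (r2 x) * ((if k = i then 1 else 0) * x j + x i * (if k = j then 1 else 0))
        + deriv H (r2 x) * (2 * x k) * c := by
  have h := ((hasFDerivAt_comp_r2 G x hG).mul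
      (((proj2 i).hasFDerivAt).mul ((proj2 j).hasFDerivAt))).add
      ((hasFDerivAt_comp_r2 H x hH).mul_const c)
  simp only [proj2, ContinuousLinearMap.proj_apply] at h
  rw [pd_eq (F := fun y => G (r2 y) * (y i * y j) + H (r2 y) * c) k x h]
  fin_cases k <;> fin_cases i <;> fin_cases j <;>
    simp [proj2, Pi.single_apply] <;> ring

/-! ### The radial coefficient functions -/

def Af (f : ℝ → ℝ) (B : ℤ) (s : ℝ) : ℝ :=
  (deriv f (Real.sqrt s)) ^ 2 / s - ((B : ℝ) ^ 2 * Real.sin (f (Real.sqrt s)) ^ 2) / s ^ 2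

def Cf (f : ℝ → ℝ) (B : ℤ) (s : ℝ) : ℝ :=
  ((B : ℝ) ^ 2 * Real.sin (f (Real.sqrt s)) ^ 2) / s

def Kf (f : ℝ → ℝ) (B : ℤ) (s : ℝ) : ℝ :=
  2 * s * deriv (Af f B) s + 3 * Af f B s + 2 * deriv (Cf f B) s

variable {f : ℝ → ℝ} {B : ℤ}

lemma sqrt_cdo : ContDiffOn ℝ (⊤ : ℕ∞) Real.sqrt (Set.Ioi 0) :=
  fun s hs => (Real.contDiffAt_sqrt (ne_of_gt hs)).contDiffWithinAt

lemma sqrt_maps : Set.MapsTo Real.sqrt (Set.Ioi (0:ℝ)) (Set.Ioi 0) :=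
  fun s hs => Real.sqrt_pos.2 hs

lemma cdo_Af (hf : ContDiffOn ℝ (⊤ : ℕ∞) f (Set.Ioi 0)) : ContDiffOn ℝ (⊤ : ℕ∞) (Af f B) (Set.Ioi 0) := by
  have hdf : ContDiffOn ℝ (⊤ : ℕ∞) (deriv f) (Set.Ioi 0) := hf.deriv_of_isOpen isOpen_Ioi (by simp)
  have h1 : ContDiffOn ℝ (⊤ : ℕ∞) (fun s => deriv f (Real.sqrt s)) (Set.Ioi 0) :=
    hdf.comp sqrt_cdo sqrt_maps
  have h2 : ContDiffOn ℝ (⊤ : ℕ∞) (fun s => f (Real.sqrt s)) (Set.Ioi 0) :=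
    hf.comp sqrt_cdo sqrt_maps
  exact ((h1.pow 2).div contDiffOn_id (fun s hs => ne_of_gt hs)).sub
    ((contDiffOn_const.mul ((Real.contDiff_sin.comp_contDiffOn h2).pow 2)).div
      (contDiffOn_id.pow 2) (fun s hs => pow_ne_zero _ (ne_of_gt hs)))

lemma cdo_Cf (hf : ContDiffOn ℝ (⊤ : ℕ∞) f (Set.Ioi 0)) : ContDiffOn ℝ (⊤ : ℕ∞) (Cf f B) (Set.Ioi 0) := by
  have h2 : ContDiffOn ℝ (⊤ : ℕ∞) (fun s => f (Real.sqrt s)) (Set.Ioi 0) :=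
    hf.comp sqrt_cdo sqrt_maps
  exact (contDiffOn_const.mul ((Real.contDiff_sin.comp_contDiffOn h2).pow 2)).div
      contDiffOn_id (fun s hs => ne_of_gt hs)

lemma cdo_Kf (hf : ContDiffOn ℝ (⊤ : ℕ∞) f (Set.Ioi 0)) : ContDiffOn ℝ (⊤ : ℕ∞) (Kf f B) (Set.Ioi 0) := by
  have hA := cdo_Af (B := B) hf
  have hC := cdo_Cf (B := B) hf
  have hA' : ContDiffOn ℝ (⊤ : ℕ∞) (deriv (Af f B)) (Set.Ioi 0) := hA.deriv_of_isOpen isOpen_Ioi (by simp)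
  have hC' : ContDiffOn ℝ (⊤ : ℕ∞) (deriv (Cf f B)) (Set.Ioi 0) := hC.deriv_of_isOpen isOpen_Ioi (by simp)
  exact (((contDiffOn_const.mul contDiffOn_id).mul hA').add
    (contDiffOn_const.mul hA)).add (contDiffOn_const.mul hC')

lemma diffAt_of_cdo {G : ℝ → ℝ} (h : ContDiffOn ℝ (⊤ : ℕ∞) G (Set.Ioi 0)) {s : ℝ} (hs : 0 < s) :
    DifferentiableAt ℝ G s :=
  ((h.contDiffAt (isOpen_Ioi.mem_nhds hs)).differentiableAt (by simp))

/-! ### Derivatives of the building blocks of `φ` -/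

lemma hasFDerivAt_nrm2 (x : Fin 2 → ℝ) (hs : 0 < r2 x) :
    HasFDerivAt nrm2 (lgen (x 0 / Real.sqrt (r2 x)) (x 1 / Real.sqrt (r2 x))) x := by
  have h := (Real.hasDerivAt_sqrt (ne_of_gt hs)).comp_hasFDerivAt x (hasFDerivAt_r2 x)
  have hr : Real.sqrt (r2 x) ≠ 0 := by positivity
  have h2 : HasFDerivAt nrm2 ((1 / (2 * Real.sqrt (r2 x))) • lgen (2 * x 0) (2 * x 1)) x := h
  refine h2.congr_fderiv (Eq.symm ?_)
  ext v; simp [proj2]; field_simp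

def pv (x : Fin 2 → ℝ) : Fin 2 → ℝ := ![-(x 1), x 0]

lemma hasFDerivAt_zeta (x : Fin 2 → ℝ) (hs : 0 < r2 x) :
    HasFDerivAt (fun y : Fin 2 → ℝ => ((y 0 : ℂ) + (y 1 : ℂ) * Complex.I) / (nrm2 y : ℂ))
      (lgen (Complex.I * (pv x 0) * ((((x 0 : ℂ) + (x 1 : ℂ) * Complex.I)) / (nrm2 x : ℂ)) / ((nrm2 x : ℂ))^2)
            (Complex.I * (pv x 1) * ((((x 0 : ℂ) + (x 1 : ℂ) * Complex.I)) / (nrm2 x : ℂ)) / ((nrm2 x : ℂ))^2)) x := by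
  have hrpos : 0 < Real.sqrt (r2 x) := Real.sqrt_pos.2 hs
  have hr0 : (nrm2 x : ℝ) ≠ 0 := ne_of_gt hrpos
  have hrC : ((nrm2 x : ℝ) : ℂ) ≠ 0 := by exact_mod_cast hr0
  have h0 : HasFDerivAt (fun y : Fin 2 → ℝ => ((y 0 : ℝ) : ℂ))
      (Complex.ofRealCLM.comp (proj2 0)) x := (Complex.ofRealCLM.comp (proj2 0)).hasFDerivAt
  have h1 : HasFDerivAt (fun y : Fin 2 → ℝ => ((y 1 : ℝ) : ℂ))
      (Complex.ofRealCLM.comp (proj2 1)) x := (Complex.ofRealCLM.comp (proj2 1)).hasFDerivAt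
  have hnum := h0.add (h1.mul_const Complex.I)
  have hden := Complex.ofRealCLM.hasFDerivAt.comp x (hasFDerivAt_nrm2 x hs)
  have hinv := (hasDerivAt_inv hrC).comp_hasFDerivAt x hden
  have hdiv := hnum.mul hinv
  have heq : (fun y : Fin 2 → ℝ => ((y 0 : ℂ) + (y 1 : ℂ) * Complex.I) / (nrm2 y : ℂ))
      = fun y : Fin 2 → ℝ => ((y 0 : ℂ) + (y 1 : ℂ) * Complex.I) * ((nrm2 y : ℂ))⁻¹ := by
    funext y; rw [div_eq_mul_inv]
  rw [heq]
  refine hdiv.congr_fderiv (Eq.symm ?_)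
  ext v
  have hsq : ((nrm2 x : ℝ) : ℂ) * ((nrm2 x : ℝ) : ℂ) = ((r2 x : ℝ) : ℂ) := by
    have : (nrm2 x) * (nrm2 x) = r2 x := Real.mul_self_sqrt hs.le
    exact_mod_cast this
  simp [proj2, Complex.real_smul, pv]
  have hrw : Real.sqrt (r2 x) = nrm2 x := rfl
  rw [hrw]
  have hsq' : ((x 0:ℂ))^2 + ((x 1:ℂ))^2 = ((nrm2 x : ℝ):ℂ)^2 := by
    have : (x 0)^2 + (x 1)^2 = (nrm2 x)^2 :=
      (Real.sq_sqrt (by positivity : (0:ℝ) ≤ x 0^2 + x 1^2)).symm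
    exact_mod_cast this
  field_simp
  linear_combination ((v 0 : ℂ) + Complex.I * (v 1 : ℂ)) * hsq'
    + (-(v 0 : ℂ) * (x 1:ℂ)^2 + (x 0:ℂ) * (x 1:ℂ) * (v 1:ℂ)) * Complex.I_sq

lemma hasFDerivAt_W (x : Fin 2 → ℝ) (hs : 0 < r2 x) (B : ℤ)
    (hz : (((x 0 : ℂ) + (x 1 : ℂ) * Complex.I) / (nrm2 x : ℂ)) ≠ 0) :
    HasFDerivAt (fun y : Fin 2 → ℝ => (((y 0 : ℂ) + (y 1 : ℂ) * Complex.I) / (nrm2 y : ℂ)) ^ B)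
      (lgen (Complex.I * B * (pv x 0) * ((((x 0 : ℂ) + (x 1 : ℂ) * Complex.I)) / (nrm2 x : ℂ))^B / ((nrm2 x : ℂ))^2)
            (Complex.I * B * (pv x 1) * ((((x 0 : ℂ) + (x 1 : ℂ) * Complex.I)) / (nrm2 x : ℂ))^B / ((nrm2 x : ℂ))^2)) x := by
  have h := (hasDerivAt_zpow B _ (Or.inl hz)).comp_hasFDerivAt x (hasFDerivAt_zeta x hs)
  have hrpos : 0 < Real.sqrt (r2 x) := Real.sqrt_pos.2 hs
  have hrC : ((nrm2 x : ℝ) : ℂ) ≠ 0 := by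
    exact_mod_cast (ne_of_gt hrpos : (nrm2 x : ℝ) ≠ 0)
  set z : ℂ := (((x 0 : ℂ) + (x 1 : ℂ) * Complex.I) / (nrm2 x : ℂ)) with hzdef
  have hzz : z^(B-1) * z = z^B := by
    rw [zpow_sub_one₀ hz, inv_mul_cancel_right₀ hz]
  have key : ∀ c : ℝ, Complex.I * B * c * z^B / ((nrm2 x : ℂ))^2
      = ((B : ℂ) * z^(B-1)) * (Complex.I * c * z / ((nrm2 x : ℂ))^2) := by
    intro c; rw [← hzz]; ring
  refine h.congr_fderiv (Eq.symm ?_)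
  ext v
  simp only [lgen_apply, ContinuousLinearMap.smul_apply, Complex.real_smul, smul_eq_mul]
  rw [key (pv x 0), key (pv x 1)]
  ring

lemma L1 (f : ℝ → ℝ) (hf : ContDiffOn ℝ (⊤ : ℕ∞) f (Set.Ioi 0)) (B : ℤ)
    (φ : (Fin 2 → ℝ) → (Fin 3 → ℝ))
    (hφ : ∀ x : Fin 2 → ℝ, φ x =
      ![Real.sin (f (nrm2 x)) * ((((x 0 : ℂ) + (x 1 : ℂ) * Complex.I) / (nrm2 x : ℂ)) ^ B).re,
        Real.sin (f (nrm2 x)) * ((((x 0 : ℂ) + (x 1 : ℂ) * Complex.I) / (nrm2 x : ℂ)) ^ B).im,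
        Real.cos (f (nrm2 x))])
    (x : Fin 2 → ℝ) (hx : x ≠ 0) (i j : Fin 2) :
    pbm φ x i j = Af f B (r2 x) * (x i * x j) + Cf f B (r2 x) * (if i = j then 1 else 0) := by
  have hs : 0 < r2 x := by
    have hor : x 0 ≠ 0 ∨ x 1 ≠ 0 := by
      by_contra hcon
      push_neg at hcon
      apply hx
      funext k
      fin_cases k
      · exact hcon.1
      · exact hcon.2
    simp only [r2]
    rcases hor with h | h
    · nlinarith [sq_nonneg (x 1), (sq_nonneg (x 0)).lt_of_ne' (pow_ne_zero 2 h)]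
    · nlinarith [sq_nonneg (x 0), (sq_nonneg (x 1)).lt_of_ne' (pow_ne_zero 2 h)]
  have hrpos : 0 < nrm2 x := Real.sqrt_pos.2 hs
  have hrne : nrm2 x ≠ 0 := ne_of_gt hrpos
  have hnr : Real.sqrt (r2 x) = nrm2 x := rfl
  have hs2 : r2 x = (nrm2 x) ^ 2 := (Real.sq_sqrt hs.le).symm
  have hs1 : r2 x = x 0 ^ 2 + x 1 ^ 2 := rfl
  have hrC : ((nrm2 x : ℝ) : ℂ) ≠ 0 := by exact_mod_cast hrne
  have hznum : ((x 0 : ℂ) + (x 1 : ℂ) * Complex.I) ≠ 0 := by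
    intro h
    have h1 := congrArg Complex.re h
    have h2 := congrArg Complex.im h
    simp at h1 h2
    rw [hs1, h1, h2] at hs
    norm_num at hs
  have hz : (((x 0 : ℂ) + (x 1 : ℂ) * Complex.I) / (nrm2 x : ℂ)) ≠ 0 := div_ne_zero hznum hrC
  set z : ℂ := (((x 0 : ℂ) + (x 1 : ℂ) * Complex.I) / (nrm2 x : ℂ)) with hzdef
  -- |z^B| = 1
  have hW1 : (z ^ B).re ^ 2 + (z ^ B).im ^ 2 = 1 := by
    have h1 : Complex.normSq z = 1 := by
      rw [hzdef, Complex.normSq_div]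
      have ha : Complex.normSq ((x 0 : ℂ) + (x 1 : ℂ) * Complex.I) = r2 x := by
        simp [Complex.normSq_apply, hs1]; ring
      have hb : Complex.normSq ((nrm2 x : ℝ) : ℂ) = r2 x := by
        rw [Complex.normSq_ofReal, hs2]; ring
      rw [ha, hb, div_self (ne_of_gt hs)]
    have h2 : Complex.normSq (z ^ B) = 1 := by
      rw [map_zpow₀ Complex.normSq z B, h1, one_zpow]
    simp only [Complex.normSq_apply] at h2
    linear_combination h2
  -- derivative of the angular part
  have hWd := hasFDerivAt_W x hs B hz
  have hre : HasFDerivAt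
      (fun y : Fin 2 → ℝ => ((((y 0 : ℂ) + (y 1 : ℂ) * Complex.I) / (nrm2 y : ℂ)) ^ B).re)
      (Complex.reCLM.comp (lgen (Complex.I * B * (pv x 0) * z ^ B / ((nrm2 x : ℂ))^2)
        (Complex.I * B * (pv x 1) * z ^ B / ((nrm2 x : ℂ))^2))) x :=
    Complex.reCLM.hasFDerivAt.comp x hWd
  have him : HasFDerivAt
      (fun y : Fin 2 → ℝ => ((((y 0 : ℂ) + (y 1 : ℂ) * Complex.I) / (nrm2 y : ℂ)) ^ B).im)
      (Complex.imCLM.comp (lgen (Complex.I * B * (pv x 0) * z ^ B / ((nrm2 x : ℂ))^2)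
        (Complex.I * B * (pv x 1) * z ^ B / ((nrm2 x : ℂ))^2))) x :=
    Complex.imCLM.hasFDerivAt.comp x hWd
  -- derivative of the radial part
  have hfd : DifferentiableAt ℝ f (nrm2 x) :=
    ((hf.contDiffAt (isOpen_Ioi.mem_nhds hrpos)).differentiableAt (by simp))
  have hu : HasFDerivAt (fun y => f (nrm2 y))
      ((deriv f (nrm2 x)) • lgen (x 0 / nrm2 x) (x 1 / nrm2 x)) x :=
    hfd.hasDerivAt.comp_hasFDerivAt x (hasFDerivAt_nrm2 x hs)
  have hsinu : HasFDerivAt (fun y => Real.sin (f (nrm2 y)))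
      ((Real.cos (f (nrm2 x))) • ((deriv f (nrm2 x)) • lgen (x 0 / nrm2 x) (x 1 / nrm2 x))) x :=
    by exact (Real.hasDerivAt_sin (f (nrm2 x))).comp_hasFDerivAt x hu
  have hcosu : HasFDerivAt (fun y => Real.cos (f (nrm2 y)))
      ((-Real.sin (f (nrm2 x))) • ((deriv f (nrm2 x)) • lgen (x 0 / nrm2 x) (x 1 / nrm2 x))) x :=
    by exact (Real.hasDerivAt_cos (f (nrm2 x))).comp_hasFDerivAt x hu
  -- the components of φ
  have e0 : (fun y => φ y 0) = (fun y : Fin 2 → ℝ =>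
      Real.sin (f (nrm2 y)) * ((((y 0 : ℂ) + (y 1 : ℂ) * Complex.I) / (nrm2 y : ℂ)) ^ B).re) := by
    funext y; rw [hφ y]; simp
  have e1 : (fun y => φ y 1) = (fun y : Fin 2 → ℝ =>
      Real.sin (f (nrm2 y)) * ((((y 0 : ℂ) + (y 1 : ℂ) * Complex.I) / (nrm2 y : ℂ)) ^ B).im) := by
    funext y; rw [hφ y]; simp
  have e2 : (fun y => φ y 2) = (fun y : Fin 2 → ℝ => Real.cos (f (nrm2 y))) := by
    funext y; rw [hφ y]; simp
  have h0 : HasFDerivAt (fun y => φ y 0)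
      (Real.sin (f (nrm2 x)) • (Complex.reCLM.comp (lgen (Complex.I * B * (pv x 0) * z ^ B / ((nrm2 x : ℂ))^2)
          (Complex.I * B * (pv x 1) * z ^ B / ((nrm2 x : ℂ))^2)))
        + (z ^ B).re • (Real.cos (f (nrm2 x)) • ((deriv f (nrm2 x)) • lgen (x 0 / nrm2 x) (x 1 / nrm2 x)))) x := by
    rw [e0]; exact hsinu.mul hre
  have h1 : HasFDerivAt (fun y => φ y 1)
      (Real.sin (f (nrm2 x)) • (Complex.imCLM.comp (lgen (Complex.I * B * (pv x 0) * z ^ B / ((nrm2 x : ℂ))^2)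
          (Complex.I * B * (pv x 1) * z ^ B / ((nrm2 x : ℂ))^2)))
        + (z ^ B).im • (Real.cos (f (nrm2 x)) • ((deriv f (nrm2 x)) • lgen (x 0 / nrm2 x) (x 1 / nrm2 x)))) x := by
    rw [e1]; exact hsinu.mul him
  have h2 : HasFDerivAt (fun y => φ y 2)
      ((-Real.sin (f (nrm2 x))) • ((deriv f (nrm2 x)) • lgen (x 0 / nrm2 x) (x 1 / nrm2 x))) x := by
    rw [e2]; exact hcosu
  -- real/imaginary parts of the angular derivative coefficients
  have hsqC : ((nrm2 x : ℝ) : ℂ) ^ 2 = ((r2 x : ℝ) : ℂ) := by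
    rw [← Complex.ofReal_pow, ← hs2]
  have hIre : ∀ c : ℝ, (Complex.I * B * c * z ^ B / ((nrm2 x : ℂ))^2).re
      = -((B : ℝ) * c * (z ^ B).im / r2 x) := by
    intro c
    rw [hsqC, Complex.div_ofReal_re]
    simp [Complex.mul_re, Complex.mul_im]
    ring
  have hIim : ∀ c : ℝ, (Complex.I * B * c * z ^ B / ((nrm2 x : ℂ))^2).im
      = (B : ℝ) * c * (z ^ B).re / r2 x := by
    intro c
    rw [hsqC, Complex.div_ofReal_im]
    simp [Complex.mul_re, Complex.mul_im]
    try ring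
  -- the partial derivatives
  have p0 : ∀ k : Fin 2, pd k (fun y => φ y 0) x
      = Real.sin (f (nrm2 x)) * (-((B : ℝ) * pv x k * (z ^ B).im / r2 x))
        + (z ^ B).re * (Real.cos (f (nrm2 x)) * (deriv f (nrm2 x) * (x k / nrm2 x))) := by
    intro k
    rw [pd_eq k x h0]
    fin_cases k <;>
      simp [Pi.single_apply, hIre] <;> ring
  have p1 : ∀ k : Fin 2, pd k (fun y => φ y 1) x
      = Real.sin (f (nrm2 x)) * ((B : ℝ) * pv x k * (z ^ B).re / r2 x)
        + (z ^ B).im * (Real.cos (f (nrm2 x)) * (deriv f (nrm2 x) * (x k / nrm2 x))) := by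
    intro k
    rw [pd_eq k x h1]
    fin_cases k <;>
      simp [Pi.single_apply, hIim] <;> ring
  have p2 : ∀ k : Fin 2, pd k (fun y => φ y 2) x
      = -Real.sin (f (nrm2 x)) * (deriv f (nrm2 x) * (x k / nrm2 x)) := by
    intro k
    rw [pd_eq k x h2]
    fin_cases k <;>
      simp [Pi.single_apply] <;> ring
  -- assemble
  have hsum : pbm φ x i j = pd i (fun y => φ y 0) x * pd j (fun y => φ y 0) x
      + pd i (fun y => φ y 1) x * pd j (fun y => φ y 1) x
      + pd i (fun y => φ y 2) x * pd j (fun y => φ y 2) x := by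
    simp only [pbm, Fin.sum_univ_three]
  rw [hsum, p0 i, p0 j, p1 i, p1 j, p2 i, p2 j]
  -- final algebra
  have hpy := Real.sin_sq_add_cos_sq (f (nrm2 x))
  trans ((deriv f (nrm2 x))^2 * (x i * x j) / (nrm2 x)^2
      + Real.sin (f (nrm2 x))^2 * (B:ℝ)^2 * (pv x i * pv x j) / (r2 x)^2)
  · linear_combination
      (Real.cos (f (nrm2 x))^2 * (deriv f (nrm2 x))^2 * (x i * x j) / (nrm2 x)^2
        + Real.sin (f (nrm2 x))^2 * (B:ℝ)^2 * (pv x i * pv x j) / (r2 x)^2) * hW1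
      + ((deriv f (nrm2 x))^2 * (x i * x j) / (nrm2 x)^2) * hpy
  · have hkey : pv x i * pv x j = r2 x * (if i = j then 1 else 0) - x i * x j := by
      fin_cases i <;> fin_cases j <;> simp [pv] <;> (try rw [hs1]) <;> ring
    rw [hkey, Af, Cf, hnr, hs2]
    by_cases hij : i = j <;> simp only [hij, if_true, if_false] <;> field_simp <;> ring

lemma r2_pos (x : Fin 2 → ℝ) (hx : x ≠ 0) : 0 < r2 x := by
  have hor : x 0 ≠ 0 ∨ x 1 ≠ 0 := by
    by_contra hcon
    push_neg at hcon
    apply hx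
    funext k
    fin_cases k
    · exact hcon.1
    · exact hcon.2
  simp only [r2]
  rcases hor with h | h
  · nlinarith [sq_nonneg (x 1), (sq_nonneg (x 0)).lt_of_ne' (pow_ne_zero 2 h)]
  · nlinarith [sq_nonneg (x 0), (sq_nonneg (x 1)).lt_of_ne' (pow_ne_zero 2 h)]

lemma pd_congr {F G : (Fin 2 → ℝ) → ℝ} (i : Fin 2) (x : Fin 2 → ℝ) (h : F =ᶠ[nhds x] G) :
    pd i F x = pd i G x := by
  rw [pd, pd, h.fderiv_eq]

lemma eventually_ne_zero {x : Fin 2 → ℝ} (hx : x ≠ 0) : ∀ᶠ y in nhds x, y ≠ 0 :=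
  (isOpen_compl_singleton.eventually_mem hx).mono fun y hy => hy

lemma L2 (f : ℝ → ℝ) (hf : ContDiffOn ℝ (⊤ : ℕ∞) f (Set.Ioi 0)) (B : ℤ)
    (φ : (Fin 2 → ℝ) → (Fin 3 → ℝ))
    (hφ : ∀ x : Fin 2 → ℝ, φ x =
      ![Real.sin (f (nrm2 x)) * ((((x 0 : ℂ) + (x 1 : ℂ) * Complex.I) / (nrm2 x : ℂ)) ^ B).re,
        Real.sin (f (nrm2 x)) * ((((x 0 : ℂ) + (x 1 : ℂ) * Complex.I) / (nrm2 x : ℂ)) ^ B).im,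
        Real.cos (f (nrm2 x))])
    (x : Fin 2 → ℝ) (hx : x ≠ 0) (j : Fin 2) :
    divpbm φ j x = Kf f B (r2 x) * x j := by
  have hs := r2_pos x hx
  have hAd : DifferentiableAt ℝ (Af f B) (r2 x) := diffAt_of_cdo (cdo_Af hf) hs
  have hCd : DifferentiableAt ℝ (Cf f B) (r2 x) := diffAt_of_cdo (cdo_Cf hf) hs
  have hev := eventually_ne_zero hx
  have hpd : ∀ i : Fin 2, pd i (fun y => pbm φ y i j) x
      = pd i (fun y => Af f B (r2 y) * (y i * y j)
          + Cf f B (r2 y) * (if i = j then 1 else 0)) x := by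
    intro i
    exact pd_congr i x (hev.mono fun y hy => L1 f hf B φ hφ y hy i j)
  have hs1 : r2 x = x 0 ^ 2 + x 1 ^ 2 := rfl
  rw [divpbm, Fin.sum_univ_two, hpd 0, hpd 1,
    pd_quad _ _ _ _ hAd hCd, pd_quad _ _ _ _ hAd hCd, Kf]
  fin_cases j
  · simp
    linear_combination (-2 * deriv (Af f B) (r2 x) * x 0) * hs1
  · simp
    linear_combination (-2 * deriv (Af f B) (r2 x) * x 1) * hs1

end S12

/-- Example of section 2: every axially symmetric baby Skyrme field is restricted harmonic,
i.e. `div(φ*h)` is a closed 1-form on `ℝ²∖{0}`. -/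
theorem stmt12 (f : ℝ → ℝ) (hf : ContDiffOn ℝ (⊤ : ℕ∞) f (Set.Ioi 0)) (B : ℤ)
    (φ : (Fin 2 → ℝ) → (Fin 3 → ℝ))
    (hφ : ∀ x : Fin 2 → ℝ, φ x =
      ![Real.sin (f (nrm2 x)) * ((((x 0 : ℂ) + (x 1 : ℂ) * Complex.I) / (nrm2 x : ℂ)) ^ B).re,
        Real.sin (f (nrm2 x)) * ((((x 0 : ℂ) + (x 1 : ℂ) * Complex.I) / (nrm2 x : ℂ)) ^ B).im,
        Real.cos (f (nrm2 x))]) :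
    ∀ x : Fin 2 → ℝ, x ≠ 0 → ∀ i j : Fin 2,
      pd i (fun y => divpbm φ j y) x = pd j (fun y => divpbm φ i y) x := by
  intro x hx i j
  have hs := S12.r2_pos x hx
  have hKd : DifferentiableAt ℝ (S12.Kf f B) (S12.r2 x) :=
    S12.diffAt_of_cdo (S12.cdo_Kf hf) hs
  have hev := S12.eventually_ne_zero hx
  have h1 : pd i (fun y => divpbm φ j y) x
      = pd i (fun y => S12.Kf f B (S12.r2 y) * y j) x :=
    S12.pd_congr i x (hev.mono fun y hy => S12.L2 f hf B φ hφ y hy j)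
  have h2 : pd j (fun y => divpbm φ i y) x
      = pd j (fun y => S12.Kf f B (S12.r2 y) * y i) x :=
    S12.pd_congr j x (hev.mono fun y hy => S12.L2 f hf B φ hφ y hy i)
  rw [h1, h2, S12.pd_radial_mul _ _ hKd i j, S12.pd_radial_mul _ _ hKd j i]
  by_cases hij : i = j
  · subst hij; ring
  · simp [hij, Ne.symm hij]; ring
end
end

section
/- Let f: (0,∞) → ℝ be smooth and define the hedgehog field φ: ℝ³∖{0} → ℝ⁴ by φ(x) = ( cos f(|x|), sin f(|x|)·x/|x| ). Then the 1-form ν = div( (Dφ)ᵀDφ ) on ℝ³∖{0} is closed (∂_iν_j = ∂_jν_i for all i,j), and hence exact on ℝ³∖{0}. (Example 3 of the paper: every hedgehog Skyrme field is restricted harmonic.) -/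
noncomputable section

/-- Euclidean norm on `ℝ³`. -/
def r3 (x : Fin 3 → ℝ) : ℝ := Real.sqrt (∑ i, x i ^ 2)

open Set Filter FormalMultilinearSeries
open scoped Topology NNReal ENNReal ContDiff




lemma r3_sq (x : Fin 3 → ℝ) : r3 x ^ 2 = ∑ i, x i ^ 2 := Real.sq_sqrt (by positivity)

lemma sum_sq_pos {x : Fin 3 → ℝ} (hx : x ≠ 0) : 0 < ∑ i, x i ^ 2 := by
  obtain ⟨i, hi⟩ := Function.ne_iff.1 hx
  have h1 : (0:ℝ) < x i ^ 2 := lt_of_le_of_ne (sq_nonneg _) (Ne.symm (pow_ne_zero 2 hi))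
  exact Finset.sum_pos' (fun j _ => sq_nonneg _) ⟨i, Finset.mem_univ i, h1⟩

lemma r3_pos {x : Fin 3 → ℝ} (hx : x ≠ 0) : 0 < r3 x := Real.sqrt_pos.2 (sum_sq_pos hx)

/-- The differential of `r3`. -/
def Lx (x : Fin 3 → ℝ) : (Fin 3 → ℝ) →L[ℝ] ℝ :=
  ∑ k, x k • ContinuousLinearMap.proj (R := ℝ) (φ := fun _ : Fin 3 => ℝ) k

lemma Lx_apply (x v : Fin 3 → ℝ) : Lx x v = ∑ k, x k * v k := by
  simp [Lx, ContinuousLinearMap.sum_apply, smul_eq_mul]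

lemma Lx_single (x : Fin 3 → ℝ) (i : Fin 3) : Lx x (Pi.single i 1) = x i := by
  rw [Lx_apply]
  simp [Pi.single_apply, mul_ite]

lemma hasFDerivAt_r3 {x : Fin 3 → ℝ} (hx : x ≠ 0) :
    HasFDerivAt r3 ((r3 x)⁻¹ • Lx x) x := by
  have hsum : (0:ℝ) < ∑ i, x i ^ 2 := sum_sq_pos hx
  have hQ : HasFDerivAt (fun y : Fin 3 → ℝ => ∑ i, y i ^ 2)
      (∑ i : Fin 3, (2 * x i) •
        ContinuousLinearMap.proj (R := ℝ) (φ := fun _ : Fin 3 => ℝ) i) x := by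
    apply HasFDerivAt.fun_sum
    intro i _
    have h1 := (ContinuousLinearMap.proj (R := ℝ) (φ := fun _ : Fin 3 => ℝ) i).hasFDerivAt (x := x)
    have h2 := h1.mul h1
    have h3 : (fun y : Fin 3 → ℝ => y i ^ 2) = fun y => y i * y i := by
      funext y; ring
    rw [h3]
    refine h2.congr_fderiv ?_
    ext v
    simp only [ContinuousLinearMap.smul_apply, ContinuousLinearMap.proj_apply,
      ContinuousLinearMap.add_apply, smul_eq_mul]
    ring
  have hs := (Real.hasDerivAt_sqrt hsum.ne').comp_hasFDerivAt x hQ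
  refine hs.congr_fderiv ?_
  symm
  ext v
  simp only [ContinuousLinearMap.smul_apply, ContinuousLinearMap.coe_sum',
    Finset.sum_apply, ContinuousLinearMap.coe_smul', Pi.smul_apply,
    ContinuousLinearMap.proj_apply, smul_eq_mul, Lx_apply]
  rw [Finset.mul_sum, Finset.mul_sum]
  refine Finset.sum_congr rfl fun k _ => ?_
  have hr : r3 x = Real.sqrt (∑ i, x i ^ 2) := rfl
  have hrpos := r3_pos hx
  rw [← hr]
  field_simp

lemma pd_of_hasFDerivAt {F : (Fin 3 → ℝ) → ℝ} {D : (Fin 3 → ℝ) →L[ℝ] ℝ} {x : Fin 3 → ℝ}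
    (h : HasFDerivAt F D x) (i : Fin 3) : pd i F x = D (Pi.single i 1) := by
  rw [pd, h.fderiv]

lemma pd_comp_r3 {u : ℝ → ℝ} {u' : ℝ} {x : Fin 3 → ℝ} (hx : x ≠ 0)
    (hu : HasDerivAt u u' (r3 x)) (i : Fin 3) :
    pd i (fun y => u (r3 y)) x = u' * x i / r3 x := by
  have h0 := hu.comp_hasFDerivAt x (hasFDerivAt_r3 hx)
  have h : HasFDerivAt (fun y => u (r3 y)) (u' • (r3 x)⁻¹ • Lx x) x := h0
  rw [pd_of_hasFDerivAt h i]
  simp [ContinuousLinearMap.smul_apply, Lx_single, smul_eq_mul]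
  ring

lemma pd_comp_r3_mul {u : ℝ → ℝ} {u' : ℝ} {x : Fin 3 → ℝ} (hx : x ≠ 0)
    (hu : HasDerivAt u u' (r3 x)) (i k : Fin 3) :
    pd i (fun y => u (r3 y) * y k) x
      = u' * x i / r3 x * x k + u (r3 x) * (if i = k then 1 else 0) := by
  have h1 := hu.comp_hasFDerivAt x (hasFDerivAt_r3 hx)
  have h2 := (ContinuousLinearMap.proj (R := ℝ) (φ := fun _ : Fin 3 => ℝ) k).hasFDerivAt (x := x)
  have h : HasFDerivAt (fun y => u (r3 y) * y k)
      ((u ∘ r3) x • ContinuousLinearMap.proj k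
        + (ContinuousLinearMap.proj (R := ℝ) (φ := fun _ : Fin 3 => ℝ) k) x
            • u' • (r3 x)⁻¹ • Lx x) x := h1.mul h2
  rw [pd_of_hasFDerivAt h i]
  simp only [ContinuousLinearMap.add_apply, ContinuousLinearMap.smul_apply,
    ContinuousLinearMap.proj_apply, Lx_single, smul_eq_mul, Pi.single_apply]
  simp only [@eq_comm (Fin 3) k i, Function.comp_apply]
  ring

def u0 (f : ℝ → ℝ) (t : ℝ) : ℝ := Real.cos (f t)
def uu (f : ℝ → ℝ) (t : ℝ) : ℝ := Real.sin (f t) / t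
def AA (f : ℝ → ℝ) (t : ℝ) : ℝ := uu f t ^ 2
def BB (f : ℝ → ℝ) (t : ℝ) : ℝ :=
  (deriv (u0 f) t ^ 2 + deriv (uu f) t ^ 2 * t ^ 2 + 2 * uu f t * deriv (uu f) t * t) / t ^ 2

lemma delta_dot (j : Fin 3) (x : Fin 3 → ℝ) :
    (if j = 0 then (1:ℝ) else 0) * x 0 + (if j = 1 then (1:ℝ) else 0) * x 1
      + (if j = 2 then (1:ℝ) else 0) * x 2 = x j := by
  fin_cases j <;> simp

lemma delta_delta (i j : Fin 3) :
    (if i = 0 then (1:ℝ) else 0) * (if j = 0 then (1:ℝ) else 0)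
      + (if i = 1 then (1:ℝ) else 0) * (if j = 1 then (1:ℝ) else 0)
      + (if i = 2 then (1:ℝ) else 0) * (if j = 2 then (1:ℝ) else 0)
      = (if i = j then 1 else 0) := by
  fin_cases i <;> fin_cases j <;> simp

lemma pbm_eq (f : ℝ → ℝ) (φ : (Fin 3 → ℝ) → (Fin 4 → ℝ))
    (hφ : ∀ x : Fin 3 → ℝ, φ x =
      ![Real.cos (f (r3 x)),
        Real.sin (f (r3 x)) * x 0 / r3 x,
        Real.sin (f (r3 x)) * x 1 / r3 x,
        Real.sin (f (r3 x)) * x 2 / r3 x])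
    {x : Fin 3 → ℝ} (hx : x ≠ 0)
    (h0 : DifferentiableAt ℝ (u0 f) (r3 x)) (h1 : DifferentiableAt ℝ (uu f) (r3 x))
    (i j : Fin 3) :
    pbm φ x i j = AA f (r3 x) * (if i = j then 1 else 0) + BB f (r3 x) * (x i * x j) := by
  have hr := r3_pos hx
  have hrne : r3 x ≠ 0 := hr.ne'
  have hc0 : (fun y => φ y 0) = fun y => u0 f (r3 y) := by
    funext y; rw [hφ y]; simp [u0]
  have hc1 : (fun y => φ y 1) = fun y => uu f (r3 y) * y 0 := by
    funext y; rw [hφ y]; show Real.sin (f (r3 y)) * y 0 / r3 y = _; rw [uu]; ring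
  have hc2 : (fun y => φ y 2) = fun y => uu f (r3 y) * y 1 := by
    funext y; rw [hφ y]; show Real.sin (f (r3 y)) * y 1 / r3 y = _; rw [uu]; ring
  have hc3 : (fun y => φ y 3) = fun y => uu f (r3 y) * y 2 := by
    funext y; rw [hφ y]; show Real.sin (f (r3 y)) * y 2 / r3 y = _; rw [uu]; ring
  have hr2 : x 0 ^ 2 + x 1 ^ 2 + x 2 ^ 2 = r3 x ^ 2 := by
    rw [r3_sq, Fin.sum_univ_three]
  unfold pbm
  rw [Fin.sum_univ_four, hc0, hc1, hc2, hc3]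
  rw [pd_comp_r3 hx h0.hasDerivAt i, pd_comp_r3 hx h0.hasDerivAt j,
    pd_comp_r3_mul hx h1.hasDerivAt i 0, pd_comp_r3_mul hx h1.hasDerivAt j 0,
    pd_comp_r3_mul hx h1.hasDerivAt i 1, pd_comp_r3_mul hx h1.hasDerivAt j 1,
    pd_comp_r3_mul hx h1.hasDerivAt i 2, pd_comp_r3_mul hx h1.hasDerivAt j 2]
  rw [AA, BB]
  linear_combination (deriv (uu f) (r3 x) ^ 2 * x i * x j / r3 x ^ 2) * hr2
    + (uu f (r3 x) * deriv (uu f) (r3 x) * x i / r3 x) * delta_dot j x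
    + (uu f (r3 x) * deriv (uu f) (r3 x) * x j / r3 x) * delta_dot i x
    + (uu f (r3 x) ^ 2) * delta_delta i j
    - (2 * x i * x j * deriv (uu f) (r3 x) * uu f (r3 x) * (r3 x)⁻¹) * (mul_inv_cancel₀ hrne)


def CC (f : ℝ → ℝ) (t : ℝ) : ℝ := deriv (AA f) t / t + deriv (BB f) t * t + 4 * BB f t

lemma pd_model {A B : ℝ → ℝ} {A' B' : ℝ} {x : Fin 3 → ℝ} (hx : x ≠ 0)
    (hA : HasDerivAt A A' (r3 x)) (hB : HasDerivAt B B' (r3 x)) (c : ℝ) (i k l : Fin 3) :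
    pd i (fun y => A (r3 y) * c + B (r3 y) * (y k * y l)) x
      = A' * x i / r3 x * c + (B' * x i / r3 x * (x k * x l)
          + B (r3 x) * ((if i = k then 1 else 0) * x l + (if i = l then 1 else 0) * x k)) := by
  have hA1 := (hA.comp_hasFDerivAt x (hasFDerivAt_r3 hx)).mul_const c
  have hB1 := hB.comp_hasFDerivAt x (hasFDerivAt_r3 hx)
  have h2 := (ContinuousLinearMap.proj (R := ℝ) (φ := fun _ : Fin 3 => ℝ) k).hasFDerivAt (x := x)
  have h3 := (ContinuousLinearMap.proj (R := ℝ) (φ := fun _ : Fin 3 => ℝ) l).hasFDerivAt (x := x)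
  have hB2 := hB1.mul (h2.mul h3)
  have h := hA1.add hB2
  have h' : HasDerivAt (fun _ : ℝ => (0:ℝ)) 0 0 := hasDerivAt_const 0 0
  have hfull : HasFDerivAt (fun y => A (r3 y) * c + B (r3 y) * (y k * y l))
      ((c • (A' • (r3 x)⁻¹ • Lx x)) +
        ((B ∘ r3) x • ((ContinuousLinearMap.proj (R := ℝ) (φ := fun _ : Fin 3 => ℝ) k) x
              • ContinuousLinearMap.proj l
            + (ContinuousLinearMap.proj (R := ℝ) (φ := fun _ : Fin 3 => ℝ) l) x
              • ContinuousLinearMap.proj k)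
          + ((ContinuousLinearMap.proj (R := ℝ) (φ := fun _ : Fin 3 => ℝ) k) x
              * (ContinuousLinearMap.proj (R := ℝ) (φ := fun _ : Fin 3 => ℝ) l) x)
              • B' • (r3 x)⁻¹ • Lx x)) x := h
  rw [pd_of_hasFDerivAt hfull i]
  simp only [ContinuousLinearMap.add_apply, ContinuousLinearMap.smul_apply,
    ContinuousLinearMap.proj_apply, Lx_single, smul_eq_mul, Pi.single_apply]
  simp only [@eq_comm (Fin 3) k i, @eq_comm (Fin 3) l i, Function.comp_apply]
  ring

lemma delta_dot' (j : Fin 3) (x : Fin 3 → ℝ) :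
    (if (0:Fin 3) = j then (1:ℝ) else 0) * x 0 + (if (1:Fin 3) = j then (1:ℝ) else 0) * x 1
      + (if (2:Fin 3) = j then (1:ℝ) else 0) * x 2 = x j := by
  fin_cases j <;> simp

lemma div_eq (f : ℝ → ℝ) (φ : (Fin 3 → ℝ) → (Fin 4 → ℝ))
    (hφ : ∀ x : Fin 3 → ℝ, φ x =
      ![Real.cos (f (r3 x)),
        Real.sin (f (r3 x)) * x 0 / r3 x,
        Real.sin (f (r3 x)) * x 1 / r3 x,
        Real.sin (f (r3 x)) * x 2 / r3 x])
    {x : Fin 3 → ℝ} (hx : x ≠ 0)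
    (h0 : ∀ t : ℝ, 0 < t → DifferentiableAt ℝ (u0 f) t)
    (h1 : ∀ t : ℝ, 0 < t → DifferentiableAt ℝ (uu f) t)
    (hA : DifferentiableAt ℝ (AA f) (r3 x)) (hB : DifferentiableAt ℝ (BB f) (r3 x))
    (j : Fin 3) :
    divpbm φ j x = CC f (r3 x) * x j := by
  have hr := r3_pos hx
  have hrne : r3 x ≠ 0 := hr.ne'
  have hr2 : x 0 ^ 2 + x 1 ^ 2 + x 2 ^ 2 = r3 x ^ 2 := by
    rw [r3_sq, Fin.sum_univ_three]
  have hmodel : ∀ i : Fin 3, pd i (fun y => pbm φ y i j) x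
      = pd i (fun y => AA f (r3 y) * (if i = j then 1 else 0) + BB f (r3 y) * (y i * y j)) x := by
    intro i
    unfold pd
    congr 1
    apply Filter.EventuallyEq.fderiv_eq
    have hmem : {y : Fin 3 → ℝ | y ≠ 0} ∈ 𝓝 x :=
      IsOpen.mem_nhds isOpen_compl_singleton hx
    filter_upwards [hmem] with y hy
    exact pbm_eq f φ hφ hy (h0 _ (r3_pos hy)) (h1 _ (r3_pos hy)) i j
  unfold divpbm
  rw [Fin.sum_univ_three, hmodel 0, hmodel 1, hmodel 2,
    pd_model hx hA.hasDerivAt hB.hasDerivAt _ 0 0 j,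
    pd_model hx hA.hasDerivAt hB.hasDerivAt _ 1 1 j,
    pd_model hx hA.hasDerivAt hB.hasDerivAt _ 2 2 j]
  simp only [eq_self_iff_true, if_true]
  rw [CC]
  linear_combination (deriv (BB f) (r3 x) * x j / r3 x) * hr2
    + (deriv (AA f) (r3 x) / r3 x + BB f (r3 x)) * delta_dot' j x
    + (r3 x * deriv (BB f) (r3 x) * x j) * (mul_inv_cancel₀ hrne)


def GG (f : ℝ → ℝ) (t : ℝ) : ℝ := ∫ s in (1:ℝ)..t, s * CC f s

/-- Example 3: every hedgehog Skyrme field is restricted harmonic: the 1-form `div(φ*h)` is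
closed on `ℝ³∖{0}`, hence exact there. -/
theorem stmt13 (f : ℝ → ℝ) (hf : ContDiffOn ℝ (⊤ : ℕ∞) f (Set.Ioi 0))
    (φ : (Fin 3 → ℝ) → (Fin 4 → ℝ))
    (hφ : ∀ x : Fin 3 → ℝ, φ x =
      ![Real.cos (f (r3 x)),
        Real.sin (f (r3 x)) * x 0 / r3 x,
        Real.sin (f (r3 x)) * x 1 / r3 x,
        Real.sin (f (r3 x)) * x 2 / r3 x]) :
    (∀ x : Fin 3 → ℝ, x ≠ 0 → ∀ i j : Fin 3,
      pd i (fun y => divpbm φ j y) x = pd j (fun y => divpbm φ i y) x)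
    ∧ ∃ g : (Fin 3 → ℝ) → ℝ, ContDiffOn ℝ (⊤ : ℕ∞) g {x : Fin 3 → ℝ | x ≠ 0} ∧
        ∀ x : Fin 3 → ℝ, x ≠ 0 → ∀ j : Fin 3, divpbm φ j x = pd j g x := by
  have hS : IsOpen (Set.Ioi (0:ℝ)) := isOpen_Ioi
  have h_u0 : ContDiffOn ℝ (⊤ : ℕ∞) (u0 f) (Set.Ioi 0) := Real.contDiff_cos.comp_contDiffOn hf
  have h_sin : ContDiffOn ℝ (⊤ : ℕ∞) (fun t => Real.sin (f t)) (Set.Ioi 0) :=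
    Real.contDiff_sin.comp_contDiffOn hf
  have h_id : ContDiffOn ℝ (⊤ : ℕ∞) (fun t : ℝ => t) (Set.Ioi 0) :=
    contDiff_id.contDiffOn
  have h_uu : ContDiffOn ℝ (⊤ : ℕ∞) (uu f) (Set.Ioi 0) :=
    h_sin.div h_id (fun t ht => ne_of_gt ht)
  have h_d0 : ContDiffOn ℝ (⊤ : ℕ∞) (deriv (u0 f)) (Set.Ioi 0) := h_u0.deriv_of_isOpen hS (by simp)
  have h_duu : ContDiffOn ℝ (⊤ : ℕ∞) (deriv (uu f)) (Set.Ioi 0) := h_uu.deriv_of_isOpen hS (by simp)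
  have h_AA : ContDiffOn ℝ (⊤ : ℕ∞) (AA f) (Set.Ioi 0) := h_uu.pow 2
  have h_t2 : ContDiffOn ℝ (⊤ : ℕ∞) (fun t : ℝ => t ^ 2) (Set.Ioi 0) :=
    (contDiff_id.pow 2).contDiffOn
  have h_BB : ContDiffOn ℝ (⊤ : ℕ∞) (BB f) (Set.Ioi 0) := by
    apply ContDiffOn.div
    · exact ((h_d0.pow 2).add ((h_duu.pow 2).mul h_t2)).add
        ((((contDiffOn_const.mul h_uu).mul h_duu)).mul h_id)
    · exact h_t2
    · intro t ht
      exact pow_ne_zero 2 (ne_of_gt ht)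
  have h_dAA : ContDiffOn ℝ (⊤ : ℕ∞) (deriv (AA f)) (Set.Ioi 0) := h_AA.deriv_of_isOpen hS (by simp)
  have h_dBB : ContDiffOn ℝ (⊤ : ℕ∞) (deriv (BB f)) (Set.Ioi 0) := h_BB.deriv_of_isOpen hS (by simp)
  have h_CC : ContDiffOn ℝ (⊤ : ℕ∞) (CC f) (Set.Ioi 0) :=
    ((h_dAA.div h_id (fun t ht => ne_of_gt ht)).add (h_dBB.mul h_id)).add
      (contDiffOn_const.mul h_BB)
  have h_tCC : ContDiffOn ℝ (⊤ : ℕ∞) (fun t => t * CC f t) (Set.Ioi 0) := h_id.mul h_CC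
  have hcont : ContinuousOn (fun t => t * CC f t) (Set.Ioi 0) := h_tCC.continuousOn
  have hGder : ∀ t ∈ Set.Ioi (0:ℝ), HasDerivAt (GG f) (t * CC f t) t := by
    intro t ht
    apply intervalIntegral.integral_hasDerivAt_right
    · apply ContinuousOn.intervalIntegrable
      apply hcont.mono
      intro s hs
      have ht' : (0:ℝ) < t := ht
      rcases Set.mem_uIcc.1 hs with ⟨hs1, hs2⟩ | ⟨hs1, hs2⟩
      · show (0:ℝ) < s; linarith
      · show (0:ℝ) < s; linarith
    · exact ContinuousOn.stronglyMeasurableAtFilter hS hcont t ht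
    · exact hcont.continuousAt (hS.mem_nhds ht)
  have hGG : ContDiffOn ℝ (⊤ : ℕ∞) (GG f) (Set.Ioi 0) :=
    (contDiffOn_infty_iff_deriv_of_isOpen hS).2
      ⟨fun t ht => (hGder t ht).differentiableAt.differentiableWithinAt,
        h_tCC.congr fun t ht => (hGder t ht).deriv⟩
  have h_r3 : ∀ x : Fin 3 → ℝ, x ≠ 0 → ContDiffAt ℝ (⊤ : ℕ∞) r3 x := by
    intro x hx
    have hq : ContDiff ℝ (⊤ : ℕ∞) (fun y : Fin 3 → ℝ => ∑ i, y i ^ 2) := by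
      apply ContDiff.sum
      intro i _
      exact ((ContinuousLinearMap.proj (R := ℝ) (φ := fun _ : Fin 3 => ℝ) i).contDiff).pow 2
    exact (Real.contDiffAt_sqrt (sum_sq_pos hx).ne').comp x hq.contDiffAt
  have hgsmooth : ContDiffOn ℝ (⊤ : ℕ∞) (fun x => GG f (r3 x)) {x : Fin 3 → ℝ | x ≠ 0} := by
    apply ContDiffOn.comp (t := Set.Ioi (0:ℝ)) hGG
    · exact fun x hx => (h_r3 x hx).contDiffWithinAt
    · exact fun x hx => r3_pos hx
  have h0 : ∀ t : ℝ, 0 < t → DifferentiableAt ℝ (u0 f) t := fun t ht =>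
    (h_u0.contDiffAt (hS.mem_nhds ht)).differentiableAt (by simp)
  have h1 : ∀ t : ℝ, 0 < t → DifferentiableAt ℝ (uu f) t := fun t ht =>
    (h_uu.contDiffAt (hS.mem_nhds ht)).differentiableAt (by simp)
  have hAd : ∀ t : ℝ, 0 < t → DifferentiableAt ℝ (AA f) t := fun t ht =>
    (h_AA.contDiffAt (hS.mem_nhds ht)).differentiableAt (by simp)
  have hBd : ∀ t : ℝ, 0 < t → DifferentiableAt ℝ (BB f) t := fun t ht =>
    (h_BB.contDiffAt (hS.mem_nhds ht)).differentiableAt (by simp)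
  have key : ∀ x : Fin 3 → ℝ, x ≠ 0 → ∀ j : Fin 3,
      divpbm φ j x = pd j (fun x => GG f (r3 x)) x := by
    intro x hx j
    have hrpos := r3_pos hx
    have hGd : HasDerivAt (GG f) (r3 x * CC f (r3 x)) (r3 x) := hGder _ hrpos
    rw [div_eq f φ hφ hx h0 h1 (hAd _ hrpos) (hBd _ hrpos) j, pd_comp_r3 hx hGd j]
    field_simp
  refine ⟨?_, fun x => GG f (r3 x), hgsmooth, key⟩
  intro x hx i j
  have hmem : {y : Fin 3 → ℝ | y ≠ 0} ∈ 𝓝 x := IsOpen.mem_nhds isOpen_compl_singleton hx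
  have hgat : ContDiffAt ℝ (⊤ : ℕ∞) (fun x => GG f (r3 x)) x := hgsmooth.contDiffAt hmem
  have main : ∀ a b : Fin 3, pd a (fun y => divpbm φ b y) x
      = fderiv ℝ (fderiv ℝ (fun x => GG f (r3 x))) x (Pi.single a 1) (Pi.single b 1) := by
    intro a b
    have h1' : (fun y => divpbm φ b y) =ᶠ[𝓝 x]
        fun y => fderiv ℝ (fun x => GG f (r3 x)) y (Pi.single b 1) := by
      filter_upwards [hmem] with y hy
      exact key y hy b
    rw [pd, h1'.fderiv_eq]
    have hdiff : DifferentiableAt ℝ (fderiv ℝ (fun x => GG f (r3 x))) x :=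
      (hgat.fderiv_right ((by exact WithTop.coe_le_coe.2 le_top) : (1:WithTop ℕ∞) + 1 ≤ ((⊤ : ℕ∞) : WithTop ℕ∞))).differentiableAt one_ne_zero
    rw [fderiv_clm_apply hdiff (differentiableAt_const _)]
    simp
  rw [main i j, main j i]
  exact hgat.isSymmSndFDerivAt (by rw [minSmoothness_of_isRCLikeNormedField]; exact WithTop.coe_le_coe.2 le_top) (Pi.single i 1) (Pi.single j 1)

end
end

section
/- Let φ: ℝ^m → ℝ be a smooth function and define the 1-form ν by ν_j = Σ_i ∂_i( ∂_iφ · ∂_jφ ) (the divergence of the pullback metric φ*h = dφ ⊗ dφ, whose matrix entries are ∂_iφ ∂_jφ). Then for all indices j,k, ∂_kν_j − ∂_jν_k = (∂_k Lφ)(∂_jφ) − (∂_j Lφ)(∂_kφ), where Lφ = Σ_i ∂_i²φ. (Flat-space case of Example 1 of the paper: for real-valued maps, d(div φ*h) = −(Δ dφ) ∧ dφ, where Δ is the Hodge Laplacian on 1-forms; in particular φ is restricted harmonic precisely when ∇(Lφ) and ∇φ are everywhere linearly dependent.) -/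
noncomputable section

section aux
variable {m : ℕ}

lemma two_le_inf : (2 : WithTop ℕ∞) ≤ ((⊤ : ℕ∞) : WithTop ℕ∞) := by
  have : ((2:ℕ∞) : WithTop ℕ∞) ≤ ((⊤ : ℕ∞) : WithTop ℕ∞) := WithTop.coe_le_coe.mpr le_top
  simpa using this

lemma pd_smooth (i : Fin m) {f : (Fin m → ℝ) → ℝ} (hf : ContDiff ℝ (⊤ : ℕ∞) f) :
    ContDiff ℝ (⊤ : ℕ∞) (pd i f) := by
  have h := hf.fderiv_right (m := (⊤ : ℕ∞)) (by simp)
  exact h.clm_apply contDiff_const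

lemma pd_diff {f : (Fin m → ℝ) → ℝ} (hf : ContDiff ℝ (⊤ : ℕ∞) f) :
    Differentiable ℝ f :=
  hf.differentiable (by simp)

lemma pd_mul (i : Fin m) {f g : (Fin m → ℝ) → ℝ} (hf : ContDiff ℝ (⊤ : ℕ∞) f)
    (hg : ContDiff ℝ (⊤ : ℕ∞) g) (x : Fin m → ℝ) :
    pd i (fun z => f z * g z) x = pd i f x * g x + f x * pd i g x := by
  unfold pd
  rw [fderiv_fun_mul ((pd_diff hf) x) ((pd_diff hg) x)]
  simp only [ContinuousLinearMap.add_apply, ContinuousLinearMap.smul_apply, smul_eq_mul]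
  ring

lemma pd_add (i : Fin m) {f g : (Fin m → ℝ) → ℝ} (hf : ContDiff ℝ (⊤ : ℕ∞) f)
    (hg : ContDiff ℝ (⊤ : ℕ∞) g) (x : Fin m → ℝ) :
    pd i (fun z => f z + g z) x = pd i f x + pd i g x := by
  unfold pd
  rw [fderiv_fun_add ((pd_diff hf) x) ((pd_diff hg) x)]
  simp

lemma pd_sum (i : Fin m) {ι : Type*} (u : Finset ι) {f : ι → (Fin m → ℝ) → ℝ}
    (hf : ∀ l, ContDiff ℝ (⊤ : ℕ∞) (f l)) (x : Fin m → ℝ) :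
    pd i (fun y => ∑ l ∈ u, f l y) x = ∑ l ∈ u, pd i (f l) x := by
  unfold pd
  rw [fderiv_fun_sum (fun l _ => (pd_diff (hf l)) x)]
  simp

lemma pd_comm (j k : Fin m) {f : (Fin m → ℝ) → ℝ} (hf : ContDiff ℝ (⊤ : ℕ∞) f)
    (x : Fin m → ℝ) : pd j (pd k f) x = pd k (pd j f) x := by
  have hsymm : IsSymmSndFDerivAt ℝ f x :=
    hf.contDiffAt.isSymmSndFDerivAt (by simpa using two_le_inf)
  have key : ∀ (v w : Fin m → ℝ),
      fderiv ℝ (fun y => fderiv ℝ f y v) x w = fderiv ℝ (fderiv ℝ f) x w v := by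
    intro v w
    have hd : DifferentiableAt ℝ (fderiv ℝ f) x :=
      ((hf.fderiv_right (m := (⊤ : ℕ∞)) (by simp)).differentiable
        (by simp)) x
    rw [fderiv_clm_apply hd (differentiableAt_const v)]
    simp
  unfold pd
  rw [key, key, hsymm.eq]

end aux

/-- Flat-space case of Example 1: for a real-valued map `φ`,
`d(div φ*h) = −(Δ dφ) ∧ dφ`, i.e. `∂_kν_j − ∂_jν_k = (∂_k Δφ)(∂_jφ) − (∂_j Δφ)(∂_kφ)`
where `ν_j = Σ_i ∂_i(∂_iφ ∂_jφ)` and `Δφ = Σ_i ∂_i²φ`. -/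
theorem stmt15 {m : ℕ}
    (φ : (Fin m → ℝ) → ℝ) (hφ : ContDiff ℝ (⊤ : ℕ∞) φ) :
    ∀ (x : Fin m → ℝ) (j k : Fin m),
      pd k (fun y => ∑ i, pd i (fun z => pd i φ z * pd j φ z) y) x
        - pd j (fun y => ∑ i, pd i (fun z => pd i φ z * pd k φ z) y) x
      = pd k (fun y => ∑ i, pd i (fun z => pd i φ z) y) x * pd j φ x
        - pd j (fun y => ∑ i, pd i (fun z => pd i φ z) y) x * pd k φ x := by
  intro x j k
  have hφ' : ContDiff ℝ (⊤ : ℕ∞) φ := hφ.of_le (by simp)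
  have h1 : ∀ i, ContDiff ℝ (⊤ : ℕ∞) (pd i φ) := fun i => pd_smooth i hφ'
  have h2 : ∀ i j : Fin m, ContDiff ℝ (⊤ : ℕ∞) (pd i (pd j φ)) :=
    fun i j => pd_smooth i (h1 j)
  have hswap : ∀ a b : Fin m, pd a (pd b φ) = pd b (pd a φ) :=
    fun a b => funext (pd_comm a b hφ')
  -- expansion of ν
  have E : ∀ j k : Fin m,
      pd k (fun y => ∑ i, pd i (fun z => pd i φ z * pd j φ z) y) x
      = ∑ i, (pd k (pd i (pd i φ)) x * pd j φ x + pd i (pd i φ) x * pd k (pd j φ) x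
          + (pd k (pd i φ) x * pd i (pd j φ) x + pd i φ x * pd k (pd i (pd j φ)) x)) := by
    intro j k
    have hfun : (fun y => ∑ i, pd i (fun z => pd i φ z * pd j φ z) y)
        = fun y => ∑ i, (pd i (pd i φ) y * pd j φ y + pd i φ y * pd i (pd j φ) y) := by
      funext y
      exact Finset.sum_congr rfl fun i _ => pd_mul i (h1 i) (h1 j) y
    rw [hfun, pd_sum k Finset.univ
      (fun i => ((h2 i i).mul (h1 j)).add ((h1 i).mul (h2 i j))) x]
    refine Finset.sum_congr rfl fun i _ => ?_
    rw [pd_add k ((h2 i i).mul (h1 j)) ((h1 i).mul (h2 i j)) x,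
      pd_mul k (h2 i i) (h1 j) x, pd_mul k (h1 i) (h2 i j) x]
  have F : ∀ k : Fin m,
      pd k (fun y => ∑ i, pd i (fun z => pd i φ z) y) x
      = ∑ i, pd k (pd i (pd i φ)) x :=
    fun k => pd_sum k Finset.univ (fun i => h2 i i) x
  rw [E j k, E k j, F k, F j, Finset.sum_mul, Finset.sum_mul,
    ← Finset.sum_sub_distrib, ← Finset.sum_sub_distrib]
  refine Finset.sum_congr rfl fun i _ => ?_
  have hD : pd k (pd i (pd j φ)) x = pd j (pd i (pd k φ)) x := by
    rw [hswap i j, pd_comm k j (h1 i) x, hswap k i]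
  rw [hD, hswap k j, hswap k i, hswap j i]
  ring
end
end

section
/- Let c, θ ∈ ℝ and define the real 3×3 matrices ξ₁ = 2c²[[0,0,0],[0,0,−1],[0,1,0]], ξ₂ = 2c²[[0, sin θ, cos θ],[−sin θ, 0, 0],[−cos θ, 0, 0]], ξ₃ = 2c²[[0, −cos θ, sin θ],[cos θ, 0, 0],[−sin θ, 0, 0]]. Then for every real symmetric 3×3 matrix m with tr m = 0: −Σ_{a=1}^{3} tr(ξ_a m ξ_a m) = −8c⁴( m₁₂² + m₂₃² + m₁₃² − m₁₁m₂₂ − m₂₂m₃₃ − m₃₃m₁₁ ) = −4c⁴ ‖m‖²_F. (The key algebraic identity, equation (4.16) of the paper, in the proof that inverse stereographic projection is restricted E₄-stable: ⟨φ*ω·L_Xg, L_Xg·φ*ω⟩ = −4 f′(r)⁴ |L_Xg|², where the ξ_a are the components of the pulled-back commutator 2-form φ*ω of the stereographic hedgehog with c = f′(r) and θ = f(r).) -/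
/-!
Each `ξ_a` is `2c²` times the cross-product matrix `[v_a]ₓ` of a vector `v_a`, and
`v₁ = e₁`, `v₂ = (0, cos θ, -sin θ)`, `v₃ = (0, sin θ, cos θ)` form an orthonormal frame.
For symmetric `m` the contraction of two Levi-Civita symbols gives
`tr([v]ₓ m [v]ₓ m) = -2 vᵀ (adj m) v`, and summing a quadratic form over an orthonormal frame
yields its trace, so the sum is `-8c⁴ tr(adj m)`, independently of `θ`. Finally
`tr(adj m) = e₂(m)`, and for traceless `m` one has `‖m‖²_F = tr(m²) = -2 e₂(m)`.
-/

open Matrix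

noncomputable section

namespace Matrix

variable {R : Type*} [CommRing R]

/-- The matrix of `w ↦ v ⨯₃ w`. -/
def crossMatrix (v : Fin 3 → R) : Matrix (Fin 3) (Fin 3) R :=
  !![0, -v 2, v 1; v 2, 0, -v 0; -v 1, v 0, 0]

theorem trace_smul_mul_smul_mul {n : Type*} [Fintype n] (r : R) (A m : Matrix n n R) :
    (r • A * m * (r • A) * m).trace = r ^ 2 * (A * m * A * m).trace := by
  simp [trace_smul, smul_smul, sq]

theorem sum_dotProduct_mulVec_eq_trace {n : Type*} [Fintype n] [DecidableEq n]
    {V : Matrix n n R} (hV : Vᵀ * V = 1) (B : Matrix n n R) :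
    ∑ a, V a ⬝ᵥ (B *ᵥ V a) = B.trace :=
  calc ∑ a, V a ⬝ᵥ (B *ᵥ V a) = (V * B * Vᵀ).trace := by
        simp only [trace, diag, mul_mul_apply, transpose_transpose]
    _ = B.trace := by rw [trace_mul_cycle, hV, Matrix.one_mul]

section Symmetric

variable {m : Matrix (Fin 3) (Fin 3) R}

theorem IsSymm.trace_crossMatrix_mul_crossMatrix_mul (hm : m.IsSymm) (v : Fin 3 → R) :
    (crossMatrix v * m * crossMatrix v * m).trace = -2 * (v ⬝ᵥ (m.adjugate *ᵥ v)) := by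
  simp only [trace_fin_three, mul_apply, Fin.sum_univ_three]
  simp [crossMatrix, adjugate_fin_three, dotProduct, mulVec, Fin.sum_univ_three,
    hm.apply 0 1, hm.apply 0 2, hm.apply 1 2]
  ring

theorem IsSymm.sum_trace_crossMatrix_mul_crossMatrix_mul (hm : m.IsSymm) {V : Matrix (Fin 3) (Fin 3) R}
    (hV : Vᵀ * V = 1) :
    ∑ a, (crossMatrix (V a) * m * crossMatrix (V a) * m).trace = -2 * m.adjugate.trace := by
  rw [Finset.sum_congr rfl fun a _ => hm.trace_crossMatrix_mul_crossMatrix_mul (V a),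
    ← Finset.mul_sum, sum_dotProduct_mulVec_eq_trace hV]

theorem IsSymm.neg_trace_adjugate (hm : m.IsSymm) :
    -m.adjugate.trace = m 0 1 ^ 2 + m 1 2 ^ 2 + m 0 2 ^ 2
      - m 0 0 * m 1 1 - m 1 1 * m 2 2 - m 2 2 * m 0 0 := by
  simp [trace_fin_three, adjugate_fin_three, hm.apply 0 1, hm.apply 0 2, hm.apply 1 2]
  ring

theorem IsSymm.sum_sq_eq_neg_two_mul_trace_adjugate (hm : m.IsSymm) (htr : m.trace = 0) :
    ∑ i, ∑ j, m i j ^ 2 = -2 * m.adjugate.trace := by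
  rw [trace_fin_three] at htr
  rw [← neg_neg m.adjugate.trace, hm.neg_trace_adjugate]
  simp only [Fin.sum_univ_three, hm.apply 0 1, hm.apply 0 2, hm.apply 1 2]
  linear_combination (m 0 0 + m 1 1 + m 2 2) * htr

end Symmetric

end Matrix

/-- Its rows are the orthonormal frame `v₁, v₂, v₃`. -/
def rotationX (θ : ℝ) : Matrix (Fin 3) (Fin 3) ℝ :=
  !![1, 0, 0; 0, Real.cos θ, -Real.sin θ; 0, Real.sin θ, Real.cos θ]

theorem rotationX_transpose_mul_self (θ : ℝ) : (rotationX θ)ᵀ * rotationX θ = 1 := by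
  ext i j
  fin_cases i <;> fin_cases j <;>
    simp [rotationX, mul_apply, Fin.sum_univ_three, one_apply] <;> ring_nf <;> simp

/-- The key algebraic identity (equation (4.16)) in the proof that inverse stereographic
projection is restricted `E₄`-stable: for the pulled-back commutator 2-form components
`ξ₁, ξ₂, ξ₃` and any traceless symmetric `m`,
`−Σ_a tr(ξ_a m ξ_a m) = −8c⁴(m₁₂² + m₂₃² + m₁₃² − m₁₁m₂₂ − m₂₂m₃₃ − m₃₃m₁₁) = −4c⁴‖m‖²_F`. -/
theorem stmt16 (c θ : ℝ)
    (ξ : Fin 3 → Matrix (Fin 3) (Fin 3) ℝ)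
    (hξ0 : ξ 0 = (2 * c ^ 2) • !![0, 0, 0; 0, 0, -1; 0, 1, 0])
    (hξ1 : ξ 1 = (2 * c ^ 2) •
      !![0, Real.sin θ, Real.cos θ; -Real.sin θ, 0, 0; -Real.cos θ, 0, 0])
    (hξ2 : ξ 2 = (2 * c ^ 2) •
      !![0, -Real.cos θ, Real.sin θ; Real.cos θ, 0, 0; -Real.sin θ, 0, 0])
    (m : Matrix (Fin 3) (Fin 3) ℝ) (hsym : mᵀ = m) (htr : m.trace = 0) :
    (-(∑ a, (ξ a * m * ξ a * m).trace)
      = -8 * c ^ 4 * ((m 0 1) ^ 2 + (m 1 2) ^ 2 + (m 0 2) ^ 2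
          - m 0 0 * m 1 1 - m 1 1 * m 2 2 - m 2 2 * m 0 0))
    ∧ -(∑ a, (ξ a * m * ξ a * m).trace) = -4 * c ^ 4 * (∑ i, ∑ j, (m i j) ^ 2) := by
  have hm : m.IsSymm := hsym
  have hξ : ∀ a, ξ a = (2 * c ^ 2) • crossMatrix (rotationX θ a) := by
    intro a
    fin_cases a <;> ext i j <;> fin_cases i <;> fin_cases j <;>
      simp [hξ0, hξ1, hξ2, crossMatrix, rotationX]
  have hsum : ∑ a, (ξ a * m * ξ a * m).trace = 4 * c ^ 4 * (-2 * m.adjugate.trace) := by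
    simp only [hξ, trace_smul_mul_smul_mul, ← Finset.mul_sum,
      hm.sum_trace_crossMatrix_mul_crossMatrix_mul (rotationX_transpose_mul_self θ)]
    ring
  constructor
  · rw [hsum, ← hm.neg_trace_adjugate]
    ring
  · rw [hsum, hm.sum_sq_eq_neg_two_mul_trace_adjugate htr]
    ring
end
end

section
/- Let B ≥ 1 be an integer, C₁ > 0 and C₂ > 0 real numbers, and let M be the 3×3 matrix M = 2πB^{1/3}( ((2/3)C₁ + (4/3)C₂) I₃ + (B² − 1)C₂ · diag(1,1,0) ). Then: (i) (3/2)(det M)^{1/3} = 2πB^{1/3}( C₁ + ((1 + 3B²)/2) C₂ )^{2/3}( C₁ + 2C₂ )^{1/3}; (ii) the matrix A_B = diag(λ_B, λ_B, λ_B^{−2}) with λ_B = ( (2C₁ + 4C₂)/(2C₁ + (3B² + 1)C₂) )^{1/6} satisfies det A_B = 1 and A_Bᵀ M A_B = (det M)^{1/3} I₃; consequently A_B minimizes A ↦ ½tr(AᵀMA) over all real 3×3 matrices of determinant 1, with minimum value 2πB^{1/3}( C₁ + ((1 + 3B²)/2) C₂ )^{2/3}( C₁ + 2C₂ )^{1/3}.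 (The linearly improved BPS skyrmion Example of section 5 of the paper: M is the average strain matrix of the axially symmetric charge-B BPS skyrmion with C₁ = ∫₀^∞ f′(r)²r²dr, C₂ = ∫₀^∞ sin²f(r)dr, and ½tr(AᵀMA) = E₂(φ_B ∘ A).) -/
open Matrix

noncomputable section

lemma cube_inj {x y : ℝ} (hx : 0 ≤ x) (hy : 0 ≤ y) (h : x^3 = y^3) : x = y := by
  rcases lt_trichotomy x y with h'|h'|h'
  · have := pow_lt_pow_left₀ h' hx (n := 3) (by norm_num)
    linarith
  · exact h'
  · have := pow_lt_pow_left₀ h' hy (n := 3) (by norm_num)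
    linarith

lemma rpow_third_cube {x : ℝ} (hx : 0 ≤ x) : (x ^ ((1:ℝ)/3))^3 = x := by
  rw [← Real.rpow_natCast (x ^ ((1:ℝ)/3)) 3, ← Real.rpow_mul hx]
  norm_num

lemma cube_rpow_third {x : ℝ} (hx : 0 ≤ x) : (x^3) ^ ((1:ℝ)/3) = x := by
  rw [← Real.rpow_natCast x 3, ← Real.rpow_mul hx]
  norm_num

lemma rpow_sixth_pow {x : ℝ} (hx : 0 ≤ x) : (x ^ ((1:ℝ)/6))^6 = x := by
  rw [← Real.rpow_natCast (x ^ ((1:ℝ)/6)) 6, ← Real.rpow_mul hx]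
  norm_num

lemma amgm3 (a b c : ℝ) (ha : 0 ≤ a) (hb : 0 ≤ b) (hc : 0 ≤ c) :
    27 * (a * (b * c)) ≤ (a + b + c)^3 := by
  nlinarith [mul_nonneg (add_nonneg ha hb) (sq_nonneg (a-b)),
    mul_nonneg (add_nonneg hb hc) (sq_nonneg (b-c)),
    mul_nonneg (add_nonneg ha hc) (sq_nonneg (a-c)),
    mul_nonneg ha (sq_nonneg (b-c)), mul_nonneg hb (sq_nonneg (a-c)),
    mul_nonneg hc (sq_nonneg (a-b))]

lemma hadamard9 (a b c d e f g h i : ℝ) :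
    27 * (a*e*i - a*f*h - b*d*i + b*f*g + c*d*h - c*e*g)^2
      ≤ ((a^2+b^2+c^2) + (d^2+e^2+f^2) + (g^2+h^2+i^2))^3 := by
  have h1 : (a*e*i - a*f*h - b*d*i + b*f*g + c*d*h - c*e*g)^2
      ≤ (a^2+b^2+c^2) * ((e*i - f*h)^2 + (f*g - d*i)^2 + (d*h - e*g)^2) := by
    nlinarith [sq_nonneg (a*(f*g-d*i) - b*(e*i-f*h)),
      sq_nonneg (a*(d*h-e*g) - c*(e*i-f*h)),
      sq_nonneg (b*(d*h-e*g) - c*(f*g-d*i))]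
  have h2 : (e*i - f*h)^2 + (f*g - d*i)^2 + (d*h - e*g)^2
      ≤ (d^2+e^2+f^2) * (g^2+h^2+i^2) := by
    nlinarith [sq_nonneg (d*g + e*h + f*i)]
  have h3 : 27 * ((a^2+b^2+c^2) * ((d^2+e^2+f^2) * (g^2+h^2+i^2)))
      ≤ ((a^2+b^2+c^2) + (d^2+e^2+f^2) + (g^2+h^2+i^2))^3 :=
    amgm3 _ _ _ (by positivity) (by positivity) (by positivity)
  have hr1n : (0:ℝ) ≤ a^2+b^2+c^2 := by positivity
  linarith [h1, mul_le_mul_of_nonneg_left h2 hr1n, h3]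

lemma cuberoot_le {x y : ℝ} (hx : 0 < x) (hy : 0 ≤ y) (h : 27 * x ≤ y^3) :
    3 * x ^ ((1:ℝ)/3) ≤ y := by
  have h1 : x ^ ((1:ℝ)/3) ≤ ((y/3)^3) ^ ((1:ℝ)/3) :=
    Real.rpow_le_rpow hx.le (by nlinarith) (by norm_num)
  have h2 : ((y/3)^3 : ℝ) ^ ((1:ℝ)/3) = y/3 := by
    rw [← Real.rpow_natCast (y/3) 3, ← Real.rpow_mul (by positivity)]
    norm_num
  rw [h2] at h1
  linarith

lemma min_ineq (p q : ℝ) (hp : 0 < p) (hq : 0 < q) (A' : Matrix (Fin 3) (Fin 3) ℝ)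
    (h1 : A'.det = 1) :
    3 * (p^2*q) ^ ((1:ℝ)/3) ≤ (A'ᵀ * Matrix.diagonal ![p,p,q] * A').trace := by
  have htr : (A'ᵀ * Matrix.diagonal ![p,p,q] * A').trace =
      p * (A' 0 0 ^2 + A' 0 1 ^2 + A' 0 2 ^2) + p * (A' 1 0 ^2 + A' 1 1 ^2 + A' 1 2 ^2)
        + q * (A' 2 0 ^2 + A' 2 1 ^2 + A' 2 2 ^2) := by
    simp [Matrix.trace, Matrix.diag, Matrix.mul_apply, Matrix.diagonal, Fin.sum_univ_three,
      Matrix.transpose_apply]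
    ring
  rw [Matrix.det_fin_three] at h1
  set sp := Real.sqrt p with hsp
  set sq := Real.sqrt q with hsq
  have hsp2 : sp^2 = p := Real.sq_sqrt hp.le
  have hsq2 : sq^2 = q := Real.sq_sqrt hq.le
  have key := hadamard9 (sp * A' 0 0) (sp * A' 0 1) (sp * A' 0 2)
    (sp * A' 1 0) (sp * A' 1 1) (sp * A' 1 2) (sq * A' 2 0) (sq * A' 2 1) (sq * A' 2 2)
  have hD : (sp * A' 0 0)*(sp * A' 1 1)*(sq * A' 2 2) - (sp * A' 0 0)*(sp * A' 1 2)*(sq * A' 2 1)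
      - (sp * A' 0 1)*(sp * A' 1 0)*(sq * A' 2 2) + (sp * A' 0 1)*(sp * A' 1 2)*(sq * A' 2 0)
      + (sp * A' 0 2)*(sp * A' 1 0)*(sq * A' 2 1) - (sp * A' 0 2)*(sp * A' 1 1)*(sq * A' 2 0)
      = sp^2 * sq := by
    linear_combination (sp^2 * sq) * h1
  have hF : ((sp * A' 0 0)^2+(sp * A' 0 1)^2+(sp * A' 0 2)^2)
      + ((sp * A' 1 0)^2+(sp * A' 1 1)^2+(sp * A' 1 2)^2)
      + ((sq * A' 2 0)^2+(sq * A' 2 1)^2+(sq * A' 2 2)^2)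
      = (A'ᵀ * Matrix.diagonal ![p,p,q] * A').trace := by
    rw [htr]; rw [← hsp2, ← hsq2]; ring
  rw [hD, hF] at key
  have hsval : (sp^2 * sq)^2 = p^2 * q := by rw [mul_pow, ← pow_mul, hsq2]; rw [show 2*2=4 from rfl, show (4:ℕ)=2*2 from rfl, pow_mul, hsp2]
  rw [hsval] at key
  have htrnn : 0 ≤ (A'ᵀ * Matrix.diagonal ![p,p,q] * A').trace := by
    rw [htr]; positivity
  exact cuberoot_le (by positivity) htrnn key

/-- The linearly improved BPS skyrmion example of section 5: explicit minimization of
`A ↦ ½tr(AᵀMA)` over `SL(3,ℝ)` for the average strain matrix `M` of the axially symmetric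
charge-`B` BPS skyrmion. -/
theorem stmt19 (B : ℕ) (hB : 1 ≤ B) (C₁ C₂ : ℝ) (hC₁ : 0 < C₁) (hC₂ : 0 < C₂)
    (M : Matrix (Fin 3) (Fin 3) ℝ)
    (hM : M = (2 * Real.pi * (B : ℝ) ^ ((1 : ℝ) / 3)) •
      (((2 / 3 : ℝ) * C₁ + (4 / 3 : ℝ) * C₂) • (1 : Matrix (Fin 3) (Fin 3) ℝ)
        + (((B : ℝ) ^ 2 - 1) * C₂) • Matrix.diagonal ![1, 1, 0]))
    (lamB : ℝ)
    (hlam : lamB = ((2 * C₁ + 4 * C₂) / (2 * C₁ + (3 * (B : ℝ) ^ 2 + 1) * C₂)) ^ ((1 : ℝ) / 6))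
    (A : Matrix (Fin 3) (Fin 3) ℝ)
    (hA : A = Matrix.diagonal ![lamB, lamB, (lamB ^ 2)⁻¹]) :
    ((3 / 2 : ℝ) * M.det ^ ((1 : ℝ) / 3)
      = 2 * Real.pi * (B : ℝ) ^ ((1 : ℝ) / 3)
          * (C₁ + (1 + 3 * (B : ℝ) ^ 2) / 2 * C₂) ^ ((2 : ℝ) / 3)
          * (C₁ + 2 * C₂) ^ ((1 : ℝ) / 3))
    ∧ A.det = 1
    ∧ Aᵀ * M * A = M.det ^ ((1 : ℝ) / 3) • (1 : Matrix (Fin 3) (Fin 3) ℝ)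
    ∧ (∀ A' : Matrix (Fin 3) (Fin 3) ℝ, A'.det = 1 →
        (1 / 2 : ℝ) * (Aᵀ * M * A).trace ≤ (1 / 2 : ℝ) * (A'ᵀ * M * A').trace)
    ∧ (1 / 2 : ℝ) * (Aᵀ * M * A).trace
      = 2 * Real.pi * (B : ℝ) ^ ((1 : ℝ) / 3)
          * (C₁ + (1 + 3 * (B : ℝ) ^ 2) / 2 * C₂) ^ ((2 : ℝ) / 3)
          * (C₁ + 2 * C₂) ^ ((1 : ℝ) / 3) := by
  have hBpos : (0:ℝ) < (B:ℝ) := by exact_mod_cast Nat.lt_of_lt_of_le Nat.zero_lt_one hB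
  set c : ℝ := 2 * Real.pi * (B : ℝ) ^ ((1 : ℝ) / 3) with hc
  have hcpos : 0 < c := by rw [hc]; positivity
  set u : ℝ := C₁ + (1 + 3 * (B : ℝ) ^ 2) / 2 * C₂ with hudef
  set v : ℝ := C₁ + 2 * C₂ with hvdef
  have hu : 0 < u := by rw [hudef]; positivity
  have hv : 0 < v := by rw [hvdef]; positivity
  set p : ℝ := 2 * c / 3 * u with hpdef
  set q : ℝ := 2 * c / 3 * v with hqdef
  have hp : 0 < p := by rw [hpdef]; positivity
  have hq : 0 < q := by rw [hqdef]; positivity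
  -- M is diagonal
  have hMd : M = Matrix.diagonal ![p, p, q] := by
    subst hM
    ext i j
    fin_cases i <;> fin_cases j <;>
      simp [Matrix.diagonal, Matrix.one_apply, hpdef, hqdef, hudef, hvdef] <;> ring
  have hdet : M.det = p^2 * q := by
    rw [hMd, Matrix.det_diagonal, Fin.prod_univ_three]
    simp only [Matrix.cons_val_zero, Matrix.cons_val_one, Matrix.head_cons,
      Matrix.cons_val_two, Matrix.tail_cons]
    ring
  -- cube roots
  set U : ℝ := u ^ ((1:ℝ)/3) with hUdef
  set V : ℝ := v ^ ((1:ℝ)/3) with hVdef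
  have hUpos : 0 < U := by rw [hUdef]; positivity
  have hVpos : 0 < V := by rw [hVdef]; positivity
  have hU3 : U^3 = u := rpow_third_cube hu.le
  have hV3 : V^3 = v := rpow_third_cube hv.le
  set K : ℝ := 2 * c / 3 * U^2 * V with hKdef
  have hKpos : 0 < K := by rw [hKdef]; positivity
  have hK3 : K^3 = p^2 * q := by
    rw [hKdef, hpdef, hqdef, ← hU3, ← hV3]; ring
  have hdet13 : M.det ^ ((1:ℝ)/3) = K := by
    rw [hdet, ← hK3, cube_rpow_third hKpos.le]
  -- u^(2/3) = U^2
  have hu23 : u ^ ((2:ℝ)/3) = U^2 := by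
    apply cube_inj (by positivity) (by positivity)
    have : (u ^ ((2:ℝ)/3))^3 = u^2 := by
      rw [← Real.rpow_natCast (u ^ ((2:ℝ)/3)) 3, ← Real.rpow_mul hu.le]
      norm_num
    rw [this, ← hU3]; ring
  have part1 : (3 / 2 : ℝ) * M.det ^ ((1 : ℝ) / 3) = c * u ^ ((2:ℝ)/3) * v ^ ((1:ℝ)/3) := by
    rw [hdet13, hu23, ← hVdef, hKdef]; ring
  -- lamB
  have hratio : (2 * C₁ + 4 * C₂) / (2 * C₁ + (3 * (B : ℝ) ^ 2 + 1) * C₂) = v / u := by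
    rw [div_eq_div_iff (by positivity) hu.ne', hvdef, hudef]; ring
  have hlampos : 0 < lamB := by
    rw [hlam, hratio]; positivity
  have hlam6 : lamB^6 = v / u := by
    rw [hlam, hratio, rpow_sixth_pow (by positivity)]
  have hL : lamB^2 = V / U := by
    apply cube_inj (by positivity) (by positivity)
    have h1 : (lamB^2)^3 = lamB^6 := by ring
    rw [h1, hlam6, div_pow, hU3, hV3]
  -- scalar entries of AᵀMA
  have hE1 : lamB * p * lamB = K := by
    have : lamB * p * lamB = lamB^2 * p := by ring
    rw [this, hL, hpdef, ← hU3, hKdef]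
    field_simp
  have hE2 : (lamB^2)⁻¹ * q * (lamB^2)⁻¹ = K := by
    rw [hL, hqdef, ← hV3, hKdef]
    field_simp
  -- A det
  have part2 : A.det = 1 := by
    rw [hA, Matrix.det_diagonal, Fin.prod_univ_three]
    simp only [Matrix.cons_val_zero, Matrix.cons_val_one, Matrix.head_cons,
      Matrix.cons_val_two, Matrix.tail_cons]
    field_simp
  -- AᵀMA
  have hAMA : Aᵀ * M * A
      = Matrix.diagonal ![lamB * p * lamB, lamB * p * lamB, (lamB^2)⁻¹ * q * (lamB^2)⁻¹] := by
    rw [hA, hMd, Matrix.diagonal_transpose, Matrix.diagonal_mul_diagonal,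
      Matrix.diagonal_mul_diagonal]
    ext i j
    fin_cases i <;> fin_cases j <;> simp [Matrix.diagonal]
  have part3 : Aᵀ * M * A = M.det ^ ((1 : ℝ) / 3) • (1 : Matrix (Fin 3) (Fin 3) ℝ) := by
    rw [hAMA, hdet13]
    ext i j
    fin_cases i <;> fin_cases j <;>
      simp [Matrix.diagonal, Matrix.one_apply, hE1, hE2]
  have htrA : (Aᵀ * M * A).trace = 3 * K := by
    rw [hAMA, Matrix.trace_diagonal, Fin.sum_univ_three]
    simp [hE1, hE2]
    linarith [hE1, hE2]
  have part4 : ∀ A' : Matrix (Fin 3) (Fin 3) ℝ, A'.det = 1 →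
      (1 / 2 : ℝ) * (Aᵀ * M * A).trace ≤ (1 / 2 : ℝ) * (A'ᵀ * M * A').trace := by
    intro A' hA'
    have := min_ineq p q hp hq A' hA'
    rw [← hMd] at this
    have hpqK : (p^2*q) ^ ((1:ℝ)/3) = K := by rw [← hK3, cube_rpow_third hKpos.le]
    rw [hpqK] at this
    rw [htrA]
    linarith
  have part5 : (1 / 2 : ℝ) * (Aᵀ * M * A).trace = c * u ^ ((2:ℝ)/3) * v ^ ((1:ℝ)/3) := by
    rw [htrA, hu23, ← hVdef, hKdef]; ring
  exact ⟨part1, part2, part3, part4, part5⟩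
end
end
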